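/- Let y ~ N(θ, σ²I) in ℝⁿ with θ deterministic, θ̄ = (1/n)∑θᵢ, and δ > 0 fixed. Then (σ²/(2δ)) ∑ᵢ E[1_{|yᵢ − θ̄| ≤ δ}] = (σ/√(2π)) ∑ᵢ e^{−(θ̄−θᵢ)²/(2σ²)} + n·κ·δ for some κ with |κ| ≤ 1/√(2πe). -/

import Mathlib

/-! The probability `P(|yᵢ - θ̄| ≤ δ)` is the integral of the `N(θᵢ, σ²)` density `φ` over
`[θ̄ - δ, θ̄ + δ]`. Since `|φ'(x)| = (|x - θᵢ| / σ²) φ(x)` and `t e^{-t²/2} ≤ e^{-1/2}`, the density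
is Lipschitz with constant `1 / (σ² √(2πe))`, so the integral differs from `2δ φ(θ̄)` by at most
`2δ² / (σ² √(2πe))`. After scaling by `σ² / (2δ)` each coordinate errs by at most `δ / √(2πe)`,
and `κ` is the average error divided by `δ`. -/

open MeasureTheory ProbabilityTheory Real
open scoped NNReal

lemma mul_exp_neg_sq_div_two_le (t : ℝ) : t * exp (-t ^ 2 / 2) ≤ exp (-1 / 2) := by
  have ht : t ≤ exp ((t ^ 2 - 1) / 2) := by
    nlinarith [add_one_le_exp ((t ^ 2 - 1) / 2), sq_nonneg (t - 1)]
  calc t * exp (-t ^ 2 / 2) ≤ exp ((t ^ 2 - 1) / 2) * exp (-t ^ 2 / 2) := by gcongr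
    _ = exp (-1 / 2) := by rw [← exp_add]; ring_nf

lemma sqrt_two_pi_mul_exp_one : √(2 * π * exp 1) = √(2 * π) * exp (1 / 2) := by
  rw [sqrt_mul (by positivity), exp_half]

lemma hasDerivAt_gaussianPDFReal (μ : ℝ) (v : ℝ≥0) (x : ℝ) :
    HasDerivAt (gaussianPDFReal μ v) (-(x - μ) / v * gaussianPDFReal μ v x) x := by
  have hexp : HasDerivAt (fun x ↦ -(x - μ) ^ 2 / (2 * v)) (-(x - μ) / v) x := by
    refine ((((hasDerivAt_id x).sub_const μ).pow 2).neg.div_const (2 * (v : ℝ))).congr_deriv ?_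
    simp only [id, Nat.cast_ofNat, mul_one]
    ring
  refine (hexp.exp.const_mul (√(2 * π * v))⁻¹).congr_deriv ?_
  rw [gaussianPDFReal_def]
  ring

lemma abs_deriv_gaussianPDFReal_le (μ : ℝ) {v : ℝ≥0} (hv : v ≠ 0) (x : ℝ) :
    |-(x - μ) / v * gaussianPDFReal μ v x| ≤ (v * √(2 * π * exp 1))⁻¹ := by
  have hs : 0 < √(v : ℝ) := sqrt_pos.2 (by positivity)
  set t := |x - μ| / √v
  have hsq : (x - μ) ^ 2 / (2 * v) = t ^ 2 / 2 := by
    rw [div_pow, sq_abs, sq_sqrt v.coe_nonneg]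
    ring
  have heq : |-(x - μ) / v * gaussianPDFReal μ v x|
      = t * exp (-t ^ 2 / 2) / (v * √(2 * π)) := by
    have h2πv : 0 < √(2 * π * v) := sqrt_pos.2 (by positivity)
    rw [gaussianPDFReal, abs_mul, abs_mul, abs_div, abs_neg, NNReal.abs_eq,
      abs_of_pos (exp_pos _), abs_inv, abs_of_pos h2πv, neg_div, hsq, ← neg_div,
      sqrt_mul (by positivity), show |x - μ| = t * √v by simp [t, hs.ne']]
    field_simp
  rw [heq, sqrt_two_pi_mul_exp_one, div_le_iff₀ (by positivity)]
  calc t * exp (-t ^ 2 / 2) ≤ exp (-1 / 2) := mul_exp_neg_sq_div_two_le t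
    _ = _ := by
      rw [show (-1 / 2 : ℝ) = -(1 / 2) by ring, exp_neg]
      field_simp

lemma abs_gaussianPDFReal_sub_le (μ : ℝ) {v : ℝ≥0} (hv : v ≠ 0) (x a : ℝ) :
    |gaussianPDFReal μ v x - gaussianPDFReal μ v a| ≤ (v * √(2 * π * exp 1))⁻¹ * |x - a| :=
  convex_univ.norm_image_sub_le_of_norm_hasDerivWithin_le
    (fun z _ ↦ (hasDerivAt_gaussianPDFReal μ v z).hasDerivWithinAt)
    (fun z _ ↦ abs_deriv_gaussianPDFReal_le μ hv z) trivial trivial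

lemma abs_intervalIntegral_sub_mul_le {f : ℝ → ℝ} {a b c M : ℝ}
    (hf : IntervalIntegrable f volume a b) (h : ∀ x ∈ Set.uIoc a b, |f x - c| ≤ M) :
    |(∫ x in a..b, f x) - (b - a) * c| ≤ M * |b - a| := by
  have hsub : (∫ x in a..b, f x) - (b - a) * c = ∫ x in a..b, (f x - c) := by
    rw [intervalIntegral.integral_sub hf intervalIntegrable_const,
      intervalIntegral.integral_const, smul_eq_mul]
  rw [hsub]
  exact intervalIntegral.norm_integral_le_of_norm_le_const (f := fun x ↦ f x - c) h

lemma abs_integral_gaussianPDFReal_sub_le (μ a : ℝ) {v : ℝ≥0} (hv : v ≠ 0) {δ : ℝ} (hδ : 0 ≤ δ) :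
    |(∫ x in (a - δ)..(a + δ), gaussianPDFReal μ v x) - 2 * δ * gaussianPDFReal μ v a|
      ≤ (v * √(2 * π * exp 1))⁻¹ * δ * (2 * δ) := by
  have hlen : a + δ - (a - δ) = 2 * δ := by ring
  have := abs_intervalIntegral_sub_mul_le
    ((integrable_gaussianPDFReal μ v).intervalIntegrable (a := a - δ) (b := a + δ))
    (c := gaussianPDFReal μ v a) (M := (v * √(2 * π * exp 1))⁻¹ * δ) fun x hx ↦ by
      rw [Set.uIoc_of_le (by linarith)] at hx
      refine (abs_gaussianPDFReal_sub_le μ hv x a).trans ?_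
      gcongr
      exact abs_sub_le_iff.2 ⟨by linarith [hx.2], by linarith [hx.1]⟩
  rwa [hlen, abs_of_nonneg (by positivity : (0 : ℝ) ≤ 2 * δ)] at this

lemma toReal_measure_abs_sub_le_eq_integral {Ω : Type*} [MeasurableSpace Ω] {P : Measure Ω}
    {Y : Ω → ℝ} {μ : ℝ} {v : ℝ≥0} (hv : v ≠ 0) (hY : P.map Y = gaussianReal μ v)
    (a : ℝ) {δ : ℝ} (hδ : 0 ≤ δ) :
    (P {ω | |Y ω - a| ≤ δ}).toReal = ∫ x in (a - δ)..(a + δ), gaussianPDFReal μ v x := by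
  have hYm : AEMeasurable Y P := .of_map_ne_zero (hY ▸ IsProbabilityMeasure.ne_zero _)
  have hset : {ω | |Y ω - a| ≤ δ} = Y ⁻¹' Set.Icc (a - δ) (a + δ) := by
    ext ω
    simp only [Set.mem_ofPred_eq, Set.mem_preimage, Set.mem_Icc, abs_sub_le_iff]
    constructor <;> intro h <;> constructor <;> linarith [h.1, h.2]
  rw [hset, ← Measure.map_apply_of_aemeasurable hYm measurableSet_Icc, hY,
    gaussianReal_apply_eq_integral _ hv, ENNReal.toReal_ofReal
      (setIntegral_nonneg measurableSet_Icc fun x _ ↦ gaussianPDFReal_nonneg μ v x),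
    integral_Icc_eq_integral_Ioc, intervalIntegral.integral_of_le (by linarith)]

lemma abs_sq_div_mul_measure_sub_le {Ω : Type*} [MeasurableSpace Ω] {P : Measure Ω}
    {Y : Ω → ℝ} {μ σ : ℝ} (hσ : 0 < σ) (hY : P.map Y = gaussianReal μ (σ ^ 2).toNNReal)
    (a : ℝ) {δ : ℝ} (hδ : 0 < δ) :
    |σ ^ 2 / (2 * δ) * (P {ω | |Y ω - a| ≤ δ}).toReal
        - σ / √(2 * π) * exp (-(a - μ) ^ 2 / (2 * σ ^ 2))|
      ≤ 1 / √(2 * π * exp 1) * δ := by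
  have hv : (σ ^ 2).toNNReal ≠ 0 := by simpa using hσ.ne'
  have hcoe : ((σ ^ 2).toNNReal : ℝ) = σ ^ 2 := coe_toNNReal _ (sq_nonneg σ)
  have hmid : σ / √(2 * π) * exp (-(a - μ) ^ 2 / (2 * σ ^ 2))
      = σ ^ 2 / (2 * δ) * (2 * δ * gaussianPDFReal μ (σ ^ 2).toNNReal a) := by
    rw [gaussianPDFReal, hcoe, sqrt_mul' _ (sq_nonneg σ), sqrt_sq hσ.le]
    field_simp
  rw [toReal_measure_abs_sub_le_eq_integral hv hY a hδ.le, hmid, ← mul_sub, abs_mul,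
    abs_of_pos (by positivity)]
  calc σ ^ 2 / (2 * δ) * |(∫ x in (a - δ)..(a + δ), gaussianPDFReal μ (σ ^ 2).toNNReal x)
        - 2 * δ * gaussianPDFReal μ (σ ^ 2).toNNReal a|
      ≤ σ ^ 2 / (2 * δ) * ((σ ^ 2 * √(2 * π * exp 1))⁻¹ * δ * (2 * δ)) := by
        gcongr
        simpa only [hcoe] using abs_integral_gaussianPDFReal_sub_le μ a hv hδ.le
    _ = 1 / √(2 * π * exp 1) * δ := by
        field_simp

lemma exists_abs_le_and_sum_eq_card_mul {ι : Type*} [Fintype ι] {ε : ι → ℝ} {C : ℝ}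
    (hC : 0 ≤ C) (h : ∀ i, |ε i| ≤ C) :
    ∃ κ, |κ| ≤ C ∧ ∑ i, ε i = Fintype.card ι * κ := by
  rcases isEmpty_or_nonempty ι with hι | hι
  · exact ⟨0, by simpa using hC, by simp⟩
  have hcard : (0 : ℝ) < Fintype.card ι := by exact_mod_cast Fintype.card_pos
  refine ⟨(∑ i, ε i) / Fintype.card ι, ?_, by field_simp⟩
  rw [abs_div, abs_of_pos hcard, div_le_iff₀ hcard]
  calc |∑ i, ε i| ≤ ∑ i, |ε i| := Finset.abs_sum_le_sum_abs _ _
    _ ≤ ∑ _i : ι, C := Finset.sum_le_sum fun i _ ↦ h i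
    _ = C * Fintype.card ι := by simp [mul_comm]

theorem stmt_17_general {Ω : Type*} [MeasureSpace Ω]
    (n : ℕ) (σ : ℝ) (hσ : 0 < σ) (θ : Fin n → ℝ) (y : Fin n → Ω → ℝ)
    (hdist : ∀ i, Measure.map (y i) ℙ = gaussianReal (θ i) (Real.toNNReal (σ ^ 2)))
    (θbar : ℝ) (δ : ℝ) (hδ : 0 < δ) :
    ∃ κ : ℝ, |κ| ≤ 1 / Real.sqrt (2 * Real.pi * Real.exp 1) ∧
      (σ ^ 2 / (2 * δ)) * ∑ i, (ℙ {ω | |y i ω - θbar| ≤ δ}).toReal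
        = (σ / Real.sqrt (2 * Real.pi)) * (∑ i, Real.exp (-(θbar - θ i) ^ 2 / (2 * σ ^ 2)))
          + (n : ℝ) * κ * δ := by
  set ε : Fin n → ℝ := fun i ↦ σ ^ 2 / (2 * δ) * (ℙ {ω | |y i ω - θbar| ≤ δ}).toReal
    - σ / √(2 * π) * exp (-(θbar - θ i) ^ 2 / (2 * σ ^ 2))
  obtain ⟨κ, hκ, hsum⟩ := exists_abs_le_and_sum_eq_card_mul (ε := fun i ↦ ε i / δ)
    (C := 1 / √(2 * π * exp 1)) (by positivity) fun i ↦ by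
      rw [abs_div, abs_of_pos hδ, div_le_iff₀ hδ]
      exact abs_sq_div_mul_measure_sub_le hσ (hdist i) θbar hδ
  refine ⟨κ, hκ, ?_⟩
  rw [← Finset.sum_div, Fintype.card_fin, div_eq_iff hδ.ne'] at hsum
  rw [← hsum, Finset.mul_sum, Finset.mul_sum, ← Finset.sum_add_distrib]
  simp [ε]

theorem stmt_17 {Ω : Type*} [MeasureSpace Ω] [IsProbabilityMeasure (ℙ : Measure Ω)]
    (n : ℕ) (hn : 0 < n) (σ : ℝ) (hσ : 0 < σ) (θ : Fin n → ℝ) (y : Fin n → Ω → ℝ)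
    (hdist : ∀ i, Measure.map (y i) ℙ = gaussianReal (θ i) (Real.toNNReal (σ ^ 2)))
    (θbar : ℝ) (hbar : θbar = (∑ i, θ i) / n) (δ : ℝ) (hδ : 0 < δ) :
    ∃ κ : ℝ, |κ| ≤ 1 / Real.sqrt (2 * Real.pi * Real.exp 1) ∧
      (σ ^ 2 / (2 * δ)) * ∑ i, (ℙ {ω | |y i ω - θbar| ≤ δ}).toReal
        = (σ / Real.sqrt (2 * Real.pi)) * (∑ i, Real.exp (-(θbar - θ i) ^ 2 / (2 * σ ^ 2)))
          + (n : ℝ) * κ * δ :=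
  stmt_17_general n σ hσ θ y hdist θbar δ hδ
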